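/- arXiv:2510.00842 — 3 statements merged into one kernel-verified Lean document; each statement's English description precedes it below -/
import Mathlib

section
/- For every closed convex set K ⊆ ℝⁿ and every vector u ∈ ℝⁿ, one has the inclusions K∘u ⊆ K*u ⊆ (K − u) ∪ (K + u). -/
open MeasureTheory Set
open scoped Pointwise RealInnerProductSpace ENNReal Classical

/-- The standard Gaussian measure on `ℝ^d`, with density `(2π)^(-d/2) exp(-‖x‖²/2)`
with respect to Lebesgue measure. -/
noncomputable def gaussD (d : ℕ) : Measure (EuclideanSpace ℝ (Fin d)) :=
  volume.withDensity fun x =>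
    ENNReal.ofReal ((2 * Real.pi) ^ (-(d : ℝ) / 2) * Real.exp (-‖x‖ ^ 2 / 2))

/-- The standard Gaussian measure on `ℝ`. -/
noncomputable def gauss1 : Measure ℝ :=
  volume.withDensity fun t =>
    ENNReal.ofReal ((2 * Real.pi) ^ (-(1 : ℝ) / 2) * Real.exp (-t ^ 2 / 2))

/-- The slice `(K - y) ∩ ℝu`, viewed as a subset of `ℝ` via the isometry
`t ↦ t • (u / ‖u‖)`. -/
def lineSlice {n : ℕ} (K : Set (EuclideanSpace ℝ (Fin n)))
    (u y : EuclideanSpace ℝ (Fin n)) : Set ℝ :=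
  {t : ℝ | y + t • (‖u‖⁻¹ • u) ∈ K}

/-- `Z_B(K, u)`: the set of `y ∈ u^⊥` such that `(K - y) ∩ ℝu` has Euclidean length
at least `2‖u‖`. -/
noncomputable def ZB {n : ℕ} (K : Set (EuclideanSpace ℝ (Fin n)))
    (u : EuclideanSpace ℝ (Fin n)) : Set (EuclideanSpace ℝ (Fin n)) :=
  {y | ⟪y, u⟫ = 0 ∧ ENNReal.ofReal (2 * ‖u‖) ≤ volume (lineSlice K u y)}

/-- Banaszczyk's transform `K * u = (K + [-u, u]) ∩ (Z_B + ℝu)`, with `K * 0 = K`. -/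
noncomputable def bTransform {n : ℕ} (K : Set (EuclideanSpace ℝ (Fin n)))
    (u : EuclideanSpace ℝ (Fin n)) : Set (EuclideanSpace ℝ (Fin n)) :=
  if u = 0 then K
  else (K + segment ℝ (-u) u) ∩ (ZB K u + Set.range fun t : ℝ => t • u)

/-- `Z_K(u)`: the set of `y ∈ u^⊥` such that `γ₁((K - y) ∩ ℝu) ≥ γ₁([-‖u‖, ‖u‖])`. -/
noncomputable def ZG {n : ℕ} (K : Set (EuclideanSpace ℝ (Fin n)))
    (u : EuclideanSpace ℝ (Fin n)) : Set (EuclideanSpace ℝ (Fin n)) :=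
  {y | ⟪y, u⟫ = 0 ∧ gauss1 (Set.Icc (-‖u‖) ‖u‖) ≤ gauss1 (lineSlice K u y)}

/-- The Gaussian Banaszczyk transform `K ∘ u = (K + [-u, u]) ∩ (Z_K(u) + ℝu)`,
with `K ∘ 0 = K`. -/
noncomputable def gTransform {n : ℕ} (K : Set (EuclideanSpace ℝ (Fin n)))
    (u : EuclideanSpace ℝ (Fin n)) : Set (EuclideanSpace ℝ (Fin n)) :=
  if u = 0 then K
  else (K + segment ℝ (-u) u) ∩ (ZG K u + Set.range fun t : ℝ => t • u)

/-!
The Gaussian density is symmetric and decreasing in `|t|`, so among sets of a given length the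
centred interval has the largest Gaussian measure, and the Gaussian measure of `[-m, m]` is
strictly increasing in `m`. Hence `γ₁(I_y) ≥ γ₁([-r, r])` forces `|I_y| ≥ 2r`, i.e.
`Z_K(u) ⊆ Z_B(K, u)`, which gives the first inclusion.

For the second, write `x = y + t u = k + c u` with `y ∈ Z_B`, `k ∈ K` and `|c| ≤ 1`. The slice
`I_y` is a closed interval of length at least `2‖u‖` containing `(t - c)‖u‖`, a point within
`‖u‖` of `t‖u‖`; so it contains `(t + 1)‖u‖` or `(t - 1)‖u‖`, i.e. `x + u ∈ K` or `x - u ∈ K`.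
-/

theorem withDensity_le_withDensity_Icc_of_volume_eq {f : ℝ → ℝ≥0∞}
    (hf : ∀ s t : ℝ, |s| ≤ |t| → f t ≤ f s) {S : Set ℝ} (hS : MeasurableSet S) {m : ℝ}
    (hm : 0 ≤ m) (hvol : volume S = volume (Icc (-m) m)) :
    volume.withDensity f S ≤ volume.withDensity f (Icc (-m) m) := by
  set I := Icc (-m) m
  set μ := volume.withDensity f
  have hI : MeasurableSet I := measurableSet_Icc
  have hout : μ (S \ I) ≤ f m * volume (S \ I) := by
    rw [withDensity_apply' _, ← setLIntegral_const]
    refine setLIntegral_mono' (hS.diff hI) fun t ht => hf _ _ ?_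
    rw [abs_of_nonneg hm]
    by_contra! h
    exact ht.2 (abs_le.1 h.le)
  have hin : f m * volume (I \ S) ≤ μ (I \ S) := by
    rw [withDensity_apply' _, ← setLIntegral_const]
    refine setLIntegral_mono' (hI.diff hS) fun t ht => hf _ _ ?_
    rw [abs_of_nonneg hm]
    exact abs_le.2 ht.1
  have hdiff : volume (S \ I) = volume (I \ S) := by
    have hfin : volume (S ∩ I) ≠ ∞ :=
      measure_ne_top_of_subset inter_subset_right (by simp [I])
    rw [← ENNReal.add_right_inj hfin, measure_inter_add_sdiff _ hI, inter_comm,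
      measure_inter_add_sdiff _ hS, hvol]
  calc μ S = μ (S ∩ I) + μ (S \ I) := (measure_inter_add_sdiff _ hI).symm
    _ ≤ μ (S ∩ I) + μ (I \ S) := by
      gcongr μ (S ∩ I) + ?_
      exact hout.trans (hdiff ▸ hin)
    _ = μ I := by rw [inter_comm, measure_inter_add_sdiff _ hS]

theorem gauss1_eq_gaussianReal : gauss1 = ProbabilityTheory.gaussianReal 0 1 := by
  rw [ProbabilityTheory.gaussianReal_of_var_ne_zero _ one_ne_zero, gauss1]
  congr 1
  ext t
  rw [ProbabilityTheory.gaussianPDF, ProbabilityTheory.gaussianPDFReal, Real.sqrt_eq_rpow,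
    ← Real.rpow_neg (by positivity)]
  norm_num [neg_div]

instance : IsProbabilityMeasure gauss1 := gauss1_eq_gaussianReal ▸ inferInstance

theorem gauss1_le_gauss1_Icc_of_volume_eq {S : Set ℝ} (hS : MeasurableSet S) {m : ℝ}
    (hm : 0 ≤ m) (hvol : volume S = volume (Icc (-m) m)) : gauss1 S ≤ gauss1 (Icc (-m) m) := by
  refine withDensity_le_withDensity_Icc_of_volume_eq (fun s t hst => ?_) hS hm hvol
  gcongr ENNReal.ofReal (_ * Real.exp (-?_ / 2))
  exact sq_le_sq.2 hst

theorem gauss1_Icc_lt_gauss1_Icc {m r : ℝ} (hm : 0 ≤ m) (hmr : m < r) :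
    gauss1 (Icc (-m) m) < gauss1 (Icc (-r) r) := by
  have hpos : 0 < gauss1 (Icc (-r) r \ Icc (-m) m) := by
    have hIoc : 0 < gauss1 (Ioc m r) := by
      refine pos_iff_ne_zero.2 fun h => ?_
      have := (gauss1_eq_gaussianReal ▸
        ProbabilityTheory.gaussianReal_absolutelyContinuous' 0 one_ne_zero) h
      simp [hmr.not_ge] at this
    refine hIoc.trans_le (measure_mono fun t ht => ⟨⟨by linarith [ht.1], ht.2⟩, fun h => ?_⟩)
    exact ht.1.not_ge h.2
  rwa [measure_sdiff (Icc_subset_Icc (by linarith) hmr.le) measurableSet_Icc.nullMeasurableSet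
    (measure_ne_top _ _), tsub_pos_iff_lt] at hpos

theorem le_volume_of_gauss1_Icc_le {S : Set ℝ} (hS : MeasurableSet S) {r : ℝ}
    (h : gauss1 (Icc (-r) r) ≤ gauss1 S) : ENNReal.ofReal (2 * r) ≤ volume S := by
  by_contra! hlt
  set m := (volume S).toReal / 2
  have hm : 0 ≤ m := by positivity
  have hvol : volume S = volume (Icc (-m) m) := by
    rw [Real.volume_Icc, ← ENNReal.ofReal_toReal hlt.ne_top]
    congr 1
    ring
  have hmr : m < r := by
    change (volume S).toReal / 2 < r
    linarith [ENNReal.toReal_lt_of_lt_ofReal hlt]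
  exact (gauss1_Icc_lt_gauss1_Icc hm hmr).not_ge
    (h.trans (gauss1_le_gauss1_Icc_of_volume_eq hS hm hvol))

theorem add_mem_or_sub_mem_of_ofReal_le_volume {J : Set ℝ} (hJc : IsClosed J)
    (hJ : J.OrdConnected) {r τ τ' : ℝ} (hτ' : τ' ∈ J) (hd : |τ - τ'| ≤ r)
    (hvol : ENNReal.ofReal (2 * r) ≤ volume J) : τ + r ∈ J ∨ τ - r ∈ J := by
  by_contra! h
  obtain ⟨hd₁, hd₂⟩ := abs_le.1 hd
  have hsub : J ⊆ Ioo (τ - r) (τ + r) := fun z hz => by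
    constructor
    · by_contra! hz'
      exact h.2 (hJ.out hz hτ' ⟨hz', by linarith⟩)
    · by_contra! hz'
      exact h.1 (hJ.out hτ' hz ⟨by linarith, hz'⟩)
  have hJcpt : IsCompact J := Metric.isCompact_of_isClosed_isBounded hJc
    (Metric.isBounded_Ioo _ _ |>.subset hsub)
  obtain ⟨a, ha, ha_le⟩ := hJcpt.exists_isLeast ⟨τ', hτ'⟩
  obtain ⟨b, hb, hb_ge⟩ := hJcpt.exists_isGreatest ⟨τ', hτ'⟩
  have hab : a ≤ b := ha_le hb
  have hlen : b - a < 2 * r := by linarith [(hsub ha).1, (hsub hb).2]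
  have hJab : J ⊆ Icc a b := fun z hz => ⟨ha_le hz, hb_ge hz⟩
  refine hvol.not_gt ((measure_mono hJab).trans_lt ?_)
  rw [Real.volume_Icc]
  exact (ENNReal.ofReal_lt_ofReal_iff (by linarith)).2 hlen

theorem exists_abs_le_one_of_mem_segment_neg {E : Type*} [AddCommGroup E] [Module ℝ E]
    {u s : E} (hs : s ∈ segment ℝ (-u) u) : ∃ c : ℝ, |c| ≤ 1 ∧ s = c • u := by
  obtain ⟨a, b, ha, hb, hab, rfl⟩ := hs
  exact ⟨b - a, abs_le.2 ⟨by linarith, by linarith⟩, by module⟩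

section Transforms

variable {n : ℕ} {K : Set (EuclideanSpace ℝ (Fin n))}

theorem IsClosed.lineSlice (hK : IsClosed K) (u y : EuclideanSpace ℝ (Fin n)) :
    IsClosed (lineSlice K u y) :=
  hK.preimage (by fun_prop : Continuous fun t : ℝ => y + t • (‖u‖⁻¹ • u))

theorem Convex.lineSlice (hK : Convex ℝ K) (u y : EuclideanSpace ℝ (Fin n)) :
    Convex ℝ (lineSlice K u y) :=
  (hK.translate_preimage_right y).linear_preimage (LinearMap.toSpanSingleton ℝ _ (‖u‖⁻¹ • u))

theorem mul_norm_mem_lineSlice_iff {u : EuclideanSpace ℝ (Fin n)} (hu : u ≠ 0)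
    (y : EuclideanSpace ℝ (Fin n)) (t : ℝ) : t * ‖u‖ ∈ lineSlice K u y ↔ y + t • u ∈ K := by
  rw [lineSlice, mem_ofPred_eq, smul_smul, mul_assoc, mul_inv_cancel₀ (norm_ne_zero_iff.2 hu),
    mul_one]

theorem ZG_subset_ZB (hK : IsClosed K) (u : EuclideanSpace ℝ (Fin n)) : ZG K u ⊆ ZB K u :=
  fun y hy => ⟨hy.1, le_volume_of_gauss1_Icc_le (hK.lineSlice u y).measurableSet hy.2⟩

theorem gTransform_subset_bTransform (hK : IsClosed K) (u : EuclideanSpace ℝ (Fin n)) :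
    gTransform K u ⊆ bTransform K u := by
  unfold gTransform bTransform
  split_ifs
  · exact subset_rfl
  · exact inter_subset_inter_right _ (add_subset_add_right (ZG_subset_ZB hK u))

theorem bTransform_subset_union (hKcl : IsClosed K) (hKconv : Convex ℝ K)
    (u : EuclideanSpace ℝ (Fin n)) :
    bTransform K u ⊆ ((fun x => x - u) '' K) ∪ ((fun x => x + u) '' K) := by
  unfold bTransform
  split_ifs with hu
  · exact fun x hx => Or.inl ⟨x, hx, by simp [hu]⟩
  rintro _ ⟨⟨k, hk, s, hs, rfl⟩, y, hy, _, ⟨t, rfl⟩, hx⟩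
  obtain ⟨c, hc, rfl⟩ := exists_abs_le_one_of_mem_segment_neg hs
  dsimp only at hx
  have hk' : (t - c) * ‖u‖ ∈ lineSlice K u y := by
    rwa [mul_norm_mem_lineSlice_iff hu, sub_smul, ← add_sub_assoc, hx, add_sub_cancel_right]
  have hd : |t * ‖u‖ - (t - c) * ‖u‖| ≤ ‖u‖ := by
    rw [← sub_mul, sub_sub_cancel, abs_mul, abs_norm]
    exact mul_le_of_le_one_left (norm_nonneg _) hc
  rcases add_mem_or_sub_mem_of_ofReal_le_volume (hKcl.lineSlice u y)
    (hKconv.lineSlice u y).ordConnected hk' hd hy.2 with h | h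
  · rw [← add_one_mul, mul_norm_mem_lineSlice_iff hu] at h
    exact Or.inl ⟨_, h, by dsimp only; rw [← hx]; module⟩
  · rw [← sub_one_mul, mul_norm_mem_lineSlice_iff hu] at h
    exact Or.inr ⟨_, h, by dsimp only; rw [← hx]; module⟩

end Transforms

/-- For every closed convex `K ⊆ ℝⁿ` and every `u ∈ ℝⁿ`,
`K ∘ u ⊆ K * u ⊆ (K - u) ∪ (K + u)`. -/
theorem gTransform_subset_bTransform_subset_union {n : ℕ}
    (K : Set (EuclideanSpace ℝ (Fin n))) (hKcl : IsClosed K) (hKconv : Convex ℝ K)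
    (u : EuclideanSpace ℝ (Fin n)) :
    gTransform K u ⊆ bTransform K u ∧
      bTransform K u ⊆ ((fun x => x - u) '' K) ∪ ((fun x => x + u) '' K) :=
  ⟨gTransform_subset_bTransform hKcl u, bTransform_subset_union hKcl hKconv u⟩
end

section
/- For every closed convex set K ⊆ ℝⁿ and every nonzero vector u ∈ ℝⁿ, one has K*u = ((K − u) ∪ (K + u)) ∩ (Z_B + ℝu). -/
open MeasureTheory Set
open scoped Pointwise RealInnerProductSpace ENNReal Classical

/-- If a closed convex subset of `ℝ` has measure at least `2r` and contains a point `c`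
with `τ - r ≤ c ≤ τ + r`, then it contains `τ - r` or `τ + r`. -/
lemma interval_helper {I : Set ℝ} (hconv : Convex ℝ I) (hcl : IsClosed I)
    {c τ r : ℝ} (hc : c ∈ I) (hr : 0 < r) (h1 : τ - r ≤ c) (h2 : c ≤ τ + r)
    (hvol : ENNReal.ofReal (2 * r) ≤ volume I) : τ - r ∈ I ∨ τ + r ∈ I := by
  by_contra h
  push_neg at h
  obtain ⟨hL, hR⟩ := h
  have hOC := hconv.ordConnected
  have hsub : I ⊆ Set.Ioo (τ - r) (τ + r) := by
    intro z hz
    constructor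
    · by_contra hz1; push_neg at hz1
      exact hL (hOC.out hz hc ⟨hz1, h1⟩)
    · by_contra hz2; push_neg at hz2
      exact hR (hOC.out hc hz ⟨h2, hz2⟩)
  have hbb : BddBelow I := ⟨τ - r, fun z hz => (hsub hz).1.le⟩
  have hba : BddAbove I := ⟨τ + r, fun z hz => (hsub hz).2.le⟩
  have hne : I.Nonempty := ⟨c, hc⟩
  have ha := hcl.csInf_mem hne hbb
  have hb := hcl.csSup_mem hne hba
  have hIcc : I ⊆ Set.Icc (sInf I) (sSup I) := fun z hz => ⟨csInf_le hbb hz, le_csSup hba hz⟩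
  have hle : volume I ≤ ENNReal.ofReal (sSup I - sInf I) := by
    calc volume I ≤ volume (Set.Icc (sInf I) (sSup I)) := measure_mono hIcc
    _ = ENNReal.ofReal (sSup I - sInf I) := Real.volume_Icc
  have hlt : sSup I - sInf I < 2 * r := by
    have h1' := (hsub ha).1
    have h2' := (hsub hb).2
    linarith
  exact absurd (hvol.trans hle)
    (not_le.mpr ((ENNReal.ofReal_lt_ofReal_iff (by linarith)).mpr hlt))

/-- For every closed convex `K ⊆ ℝⁿ` and nonzero `u ∈ ℝⁿ`,
`K * u = ((K - u) ∪ (K + u)) ∩ (Z_B + ℝu)`. -/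
theorem bTransform_eq_union_inter {n : ℕ}
    (K : Set (EuclideanSpace ℝ (Fin n))) (hKcl : IsClosed K) (hKconv : Convex ℝ K)
    (u : EuclideanSpace ℝ (Fin n)) (hu : u ≠ 0) :
    bTransform K u = (((fun x => x - u) '' K) ∪ ((fun x => x + u) '' K)) ∩
      (ZB K u + Set.range fun t : ℝ => t • u) := by 
  have hr : (0:ℝ) < ‖u‖ := norm_pos_iff.mpr hu
  have hsmul : ∀ a : ℝ, (a * ‖u‖) • (‖u‖⁻¹ • u) = a • u := fun a => by
    rw [smul_smul, mul_assoc, mul_inv_cancel₀ hr.ne', mul_one]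
  unfold bTransform
  rw [if_neg hu]
  ext x
  constructor
  · rintro ⟨hx1, hx2⟩
    refine ⟨?_, hx2⟩
    rw [Set.mem_add] at hx1
    obtain ⟨k, hk, w, hw, hkw⟩ := hx1
    rw [Set.mem_add] at hx2
    obtain ⟨y, hy, b, ⟨t, rfl⟩, hyt⟩ := hx2
    rw [segment_eq_image] at hw
    obtain ⟨θ, hθ, rfl⟩ := hw
    set s : ℝ := 2 * θ - 1 with hs_def
    have hs1 : -1 ≤ s := by simp only [hs_def]; linarith [hθ.1]
    have hs2 : s ≤ 1 := by simp only [hs_def]; linarith [hθ.2]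
    have h0 : k + ((1 - θ) • (-u) + θ • u) = y + t • u := by
      have := hkw.trans hyt.symm
      simpa using this
    have hkeq : k + s • u = y + t • u := by
      rw [show s • u = (1 - θ) • (-u) + θ • u from by simp only [hs_def]; module]
      exact h0
    have hk' : k = y + (t - s) • u := by
      have h := eq_sub_of_add_eq hkeq
      rw [h]; module
    -- the slice is closed and convex
    have hIcl : IsClosed (lineSlice K u y) := by
      have : Continuous fun t : ℝ => y + t • (‖u‖⁻¹ • u) :=
        continuous_const.add (continuous_id.smul continuous_const)
      exact hKcl.preimage this
    have hIconv : Convex ℝ (lineSlice K u y) := by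
      intro t1 ht1 t2 ht2 a b ha hb hab
      have hb' : b = 1 - a := by linarith
      subst hb'
      have : y + (a * t1 + (1 - a) * t2) • (‖u‖⁻¹ • u)
          = a • (y + t1 • (‖u‖⁻¹ • u)) + (1 - a) • (y + t2 • (‖u‖⁻¹ • u)) := by
        module
      show y + (a • t1 + (1 - a) • t2) • (‖u‖⁻¹ • u) ∈ K
      simp only [smul_eq_mul]
      rw [this]
      exact hKconv ht1 ht2 ha hb (by ring)
    have hc : (t - s) * ‖u‖ ∈ lineSlice K u y := by
      show y + ((t - s) * ‖u‖) • (‖u‖⁻¹ • u) ∈ K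
      rw [hsmul, ← hk']
      exact hk
    have hvol : ENNReal.ofReal (2 * ‖u‖) ≤ volume (lineSlice K u y) := hy.2
    have hmain := interval_helper hIconv hIcl hc hr
      (by nlinarith : t * ‖u‖ - ‖u‖ ≤ (t - s) * ‖u‖)
      (by nlinarith : (t - s) * ‖u‖ ≤ t * ‖u‖ + ‖u‖) hvol
    rcases hmain with hm | hm
    · -- τ - r ∈ I : x - u ∈ K, so x ∈ (· + u) '' K
      right
      have hxm : y + t • u - u ∈ K := by
        have : y + (t * ‖u‖ - ‖u‖) • (‖u‖⁻¹ • u) ∈ K := hm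
        have heq : y + (t * ‖u‖ - ‖u‖) • (‖u‖⁻¹ • u) = y + t • u - u := by
          have h1 : (t * ‖u‖ - ‖u‖) = (t - 1) * ‖u‖ := by ring
          rw [h1, hsmul]; module
        rwa [heq] at this
      rw [← hyt]
      exact ⟨y + t • u - u, hxm, by abel⟩
    · -- τ + r ∈ I : x + u ∈ K, so x ∈ (· - u) '' K
      left
      have hxm : y + t • u + u ∈ K := by
        have : y + (t * ‖u‖ + ‖u‖) • (‖u‖⁻¹ • u) ∈ K := hm
        have heq : y + (t * ‖u‖ + ‖u‖) • (‖u‖⁻¹ • u) = y + t • u + u := by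
          have h1 : (t * ‖u‖ + ‖u‖) = (t + 1) * ‖u‖ := by ring
          rw [h1, hsmul]; module
        rwa [heq] at this
      rw [← hyt]
      exact ⟨y + t • u + u, hxm, by abel⟩
  · rintro ⟨hx1, hx2⟩
    refine ⟨?_, hx2⟩
    rw [Set.mem_add]
    rcases hx1 with ⟨k, hk, rfl⟩ | ⟨k, hk, rfl⟩
    · exact ⟨k, hk, -u, left_mem_segment ℝ (-u) u, by abel⟩
    · exact ⟨k, hk, u, right_mem_segment ℝ (-u) u, rfl⟩
end

section
/- Let θ : ℝ → ℝ ∪ {−∞} be non-increasing and concave on ℝ, and suppose that for some w ∈ ℝ and some α ∈ (0, π/2), θ is affine with slope −tan(α) on the interval (−∞, −w]. Let L = {(x,y) ∈ ℝ² : x ≤ θ(y)}. Then for every ε > 0, L + ε·B₂² ⊆ L + (ε/sin(α))·e₂. -/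
open MeasureTheory Set
open scoped Pointwise RealInnerProductSpace ENNReal Classical

section Hypograph

variable {θ : ℝ → EReal}
  (hconc : Convex ℝ {p : EuclideanSpace ℝ (Fin 2) | ((p 0 : ℝ) : EReal) ≤ θ (p 1)})

include hconc in
theorem add_le_apply_add_of_convex {x₁ y₁ x₂ y₂ a c : ℝ} (h₁ : (x₁ : EReal) ≤ θ y₁)
    (h₂ : (x₂ : EReal) ≤ θ y₂) (ha : 0 ≤ a) (hc : 0 ≤ c) (hac : a + c = 1) :
    ((a * x₁ + c * x₂ : ℝ) : EReal) ≤ θ (a * y₁ + c * y₂) := by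
  have := hconc (x := !₂[x₁, y₁]) (y := !₂[x₂, y₂]) h₁ h₂ ha hc hac
  simpa using this

variable {w m b : ℝ} (haff : ∀ y ≤ -w, θ y = ((m * y + b : ℝ) : EReal))

include hconc haff in
theorem le_affine_of_eq_affine_on_Iic (y : ℝ) : θ y ≤ ((m * y + b : ℝ) : EReal) := by
  rcases le_or_gt y (-w) with hy | hy
  · exact (haff y hy).le
  by_contra! hlt
  obtain ⟨x, hxy, hx⟩ := EReal.lt_iff_exists_real_btwn.1 hlt
  have hxy : m * y + b < x := EReal.coe_lt_coe_iff.1 hxy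
  -- `-w` is the combination of `-w - 1` and `y` with weights `a` and `1 - a`.
  set a := (y + w) / (y + w + 1)
  have ha : a * (y + w + 1) = y + w := div_mul_cancel₀ _ (by linarith)
  have ha0 : 0 ≤ a := div_nonneg (by linarith) (by linarith)
  have ha1 : a < 1 := (div_lt_one (by linarith)).2 (by linarith)
  have key := add_le_apply_add_of_convex hconc (haff (-w - 1) (by linarith)).ge hx.le
    ha0 (by linarith : 0 ≤ 1 - a) (add_sub_cancel a 1)
  rw [show a * (-w - 1) + (1 - a) * y = -w by linear_combination -ha,
    haff (-w) le_rfl, EReal.coe_le_coe_iff] at key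
  linarith [mul_lt_mul_of_pos_left hxy (sub_pos.2 ha1), congrArg (m * ·) ha]

include hconc haff in
theorem sub_mul_le_apply_sub_of_eq_affine_on_Iic {x y d : ℝ} (hx : (x : EReal) ≤ θ y)
    (hd : 0 ≤ d) : ((x - m * d : ℝ) : EReal) ≤ θ (y - d) := by
  have hxy : x ≤ m * y + b :=
    EReal.coe_le_coe_iff.1 (hx.trans (le_affine_of_eq_affine_on_Iic hconc haff y))
  -- `y - d` is the combination of a point `z ≤ min (-w) (y - d)` of the line and `y`.
  set z := min (-w) (y - d) - 1
  have hzw : z ≤ -w := by linarith [min_le_left (-w) (y - d)]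
  have hzy : z < y - d := by linarith [min_le_right (-w) (y - d)]
  set a := d / (y - z)
  have ha : a * (y - z) = d := div_mul_cancel₀ _ (by linarith)
  have ha0 : 0 ≤ a := div_nonneg (by linarith) (by linarith)
  have ha1 : a ≤ 1 := (div_le_one (by linarith)).2 (by linarith)
  have key := add_le_apply_add_of_convex hconc (haff z hzw).ge hx
    ha0 (by linarith : 0 ≤ 1 - a) (add_sub_cancel a 1)
  rw [show a * z + (1 - a) * y = y - d by linear_combination -ha] at key
  refine le_trans (EReal.coe_le_coe_iff.2 ?_) key
  linarith [mul_le_mul_of_nonneg_left hxy ha0, congrArg (m * ·) ha]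

end Hypograph

section Trigonometry

variable {α ε u v : ℝ} (hα : α ∈ Ioo 0 (Real.pi / 2)) (hε : 0 ≤ ε)

include hα hε in
theorem mul_le_div_sin (hv : v ≤ 1) : ε * v ≤ ε / Real.sin α := by
  obtain ⟨hα0, hα2⟩ := hα
  have hsin : 0 < Real.sin α := Real.sin_pos_of_pos_of_lt_pi hα0 (by linarith [Real.pi_pos])
  have hvsin : v * Real.sin α ≤ 1 := by nlinarith [Real.sin_le_one α]
  rw [le_div_iff₀ hsin]
  nlinarith [mul_le_mul_of_nonneg_left hvsin hε]

include hα hε in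
theorem mul_le_tan_mul_sub (huv : u ^ 2 + v ^ 2 ≤ 1) :
    ε * u ≤ Real.tan α * (ε / Real.sin α - ε * v) := by
  obtain ⟨hα0, hα2⟩ := hα
  have hcos : 0 < Real.cos α := Real.cos_pos_of_mem_Ioo ⟨by linarith [Real.pi_pos], hα2⟩
  have hsin : 0 < Real.sin α := Real.sin_pos_of_pos_of_lt_pi hα0 (by linarith)
  have hcs : Real.cos α * u + Real.sin α * v ≤ 1 := by
    nlinarith [sq_nonneg (Real.cos α - u), sq_nonneg (Real.sin α - v),
      Real.sin_sq_add_cos_sq α]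
  rw [Real.tan_eq_sin_div_cos, div_mul_eq_mul_div, le_div_iff₀ hcos, mul_sub,
    mul_div_cancel₀ _ hsin.ne']
  nlinarith

end Trigonometry

theorem add_ball_subset_translate_general (θ : ℝ → EReal)
    (w α : ℝ) (hα : α ∈ Set.Ioo 0 (Real.pi / 2))
    (haff : ∃ b : ℝ, ∀ y ≤ -w, θ y = ((-Real.tan α * y + b : ℝ) : EReal))
    (L : Set (EuclideanSpace ℝ (Fin 2)))
    (hLdef : L = {p | ((p 0 : ℝ) : EReal) ≤ θ (p 1)}) (hconc : Convex ℝ L) :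
    ∀ ε : ℝ, 0 < ε →
      L + ε • Metric.closedBall (0 : EuclideanSpace ℝ (Fin 2)) 1 ⊆
        (fun x => x + (ε / Real.sin α) • EuclideanSpace.single (1 : Fin 2) 1) '' L := by
  subst hLdef
  obtain ⟨b, hb⟩ := haff
  rintro ε hε _ ⟨p, hp, _, ⟨v, hv, rfl⟩, rfl⟩
  set s := ε / Real.sin α
  have hv2 : v 0 ^ 2 + v 1 ^ 2 ≤ 1 := by
    have := EuclideanSpace.real_norm_sq_eq v
    simp only [Fin.sum_univ_two] at this
    nlinarith [norm_nonneg v, mem_closedBall_zero_iff.1 hv]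
  have hd : 0 ≤ s - ε * v 1 := sub_nonneg.2 (mul_le_div_sin hα hε.le (by nlinarith))
  have hshift := sub_mul_le_apply_sub_of_eq_affine_on_Iic hconc hb hp hd
  set q : EuclideanSpace ℝ (Fin 2) := p + ε • v - s • EuclideanSpace.single 1 1
  refine ⟨q, ?_, sub_add_cancel _ _⟩
  have h0 : q 0 = p 0 + ε * v 0 := by simp [q]
  have h1 : q 1 = p 1 - (s - ε * v 1) := by simp [q]; ring
  show ((_ : ℝ) : EReal) ≤ θ _
  rw [h0, h1]
  refine le_trans (EReal.coe_le_coe_iff.2 ?_) hshift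
  linarith [mul_le_tan_mul_sub hα hε.le hv2]

/-- **Claim (Appendix).** Let `θ : ℝ → ℝ ∪ {-∞}` be non-increasing and concave
(concavity encoded by the convexity of `L = {(x, y) : x ≤ θ(y)}`), affine with slope
`-tan α` on `(-∞, -w]` for some `α ∈ (0, π/2)`. Then for every `ε > 0`,
`L + ε B₂² ⊆ L + (ε / sin α) e₂`. -/
theorem add_ball_subset_translate (θ : ℝ → EReal) (hmono : Antitone θ)
    (hne : ∀ y, θ y ≠ ⊤) (w α : ℝ) (hα : α ∈ Set.Ioo 0 (Real.pi / 2))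
    (haff : ∃ b : ℝ, ∀ y ≤ -w, θ y = ((-Real.tan α * y + b : ℝ) : EReal))
    (L : Set (EuclideanSpace ℝ (Fin 2)))
    (hLdef : L = {p | ((p 0 : ℝ) : EReal) ≤ θ (p 1)}) (hconc : Convex ℝ L) :
    ∀ ε : ℝ, 0 < ε →
      L + ε • Metric.closedBall (0 : EuclideanSpace ℝ (Fin 2)) 1 ⊆
        (fun x => x + (ε / Real.sin α) • EuclideanSpace.single (1 : Fin 2) 1) '' L :=
  add_ball_subset_translate_general θ w α hα haff L hLdef hconc
end
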